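/- In a fuzzy star FS_n with center c (the vertex of the unique maximum spanning star adjacent to all other n vertices), the strong domination index is SDI(FS_n) = min{υ(uv) : uv an edge} + n·q, where q is the size (sum of all edge weights) of FS_n. -/

import Mathlib

open Finset

/-- A fuzzy graph on vertex type `V`. -/
structure FuzzyGraph (V : Type*) where
  ρ : V → ℝ
  υ : V → V → ℝ
  ρ_nonneg : ∀ a, 0 ≤ ρ a
  ρ_le_one : ∀ a, ρ a ≤ 1
  υ_nonneg : ∀ a b, 0 ≤ υ a b
  symm : ∀ a b, υ a b = υ b a
  υ_le : ∀ a b, υ a b ≤ min (ρ a) (ρ b)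
  loopless : ∀ a, υ a a = 0

namespace FuzzyGraph

variable {V : Type*} [Fintype V] [DecidableEq V]

/-- Strength of a path given by its list of successive vertices:
the minimum of the weights of its edges. -/
def pathStrength (X : FuzzyGraph V) : List V → ℝ
  | [] => 0
  | [_] => 0
  | [a, b] => X.υ a b
  | a :: b :: c :: l => min (X.υ a b) (X.pathStrength (b :: c :: l))

/-- `l` is a path from `a` to `b` : distinct vertices joined by positive-weight edges. -/
def IsPath (X : FuzzyGraph V) (a b : V) (l : List V) : Prop :=
  l.Nodup ∧ l.head? = some a ∧ l.getLast? = some b ∧ 2 ≤ l.length ∧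
    l.Chain' (fun x y => 0 < X.υ x y)

/-- Strength of connectedness between two vertices: maximum strength of a path. -/
noncomputable def conn (X : FuzzyGraph V) (a b : V) : ℝ :=
  sSup {s | ∃ l : List V, X.IsPath a b l ∧ s = X.pathStrength l}

/-- Delete the edge `ab` (set its weight to `0`). -/
def deleteEdge (X : FuzzyGraph V) (a b : V) : FuzzyGraph V where
  ρ := X.ρ
  υ x y := if (x = a ∧ y = b) ∨ (x = b ∧ y = a) then 0 else X.υ x y
  ρ_nonneg := X.ρ_nonneg
  ρ_le_one := X.ρ_le_one
  υ_nonneg := by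
    intro x y; try dsimp only
    split_ifs
    · exact le_rfl
    · exact X.υ_nonneg x y
  symm := by
    intro x y; try dsimp only
    by_cases h : (x = a ∧ y = b) ∨ (x = b ∧ y = a)
    · rw [if_pos h, if_pos (by tauto)]
    · rw [if_neg h, if_neg (by tauto), X.symm]
  υ_le := by
    intro x y; try dsimp only
    split_ifs
    · exact le_min (X.ρ_nonneg x) (X.ρ_nonneg y)
    · exact X.υ_le x y
  loopless := by
    intro x; try dsimp only
    split_ifs
    · rfl
    · exact X.loopless x

/-- `ab` is a strong edge (α- or β-strong). -/
def StrongEdge (X : FuzzyGraph V) (a b : V) : Prop :=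
  0 < X.υ a b ∧ (X.deleteEdge a b).conn a b ≤ X.υ a b

/-- `ab` is an α-strong edge. -/
def AlphaStrong (X : FuzzyGraph V) (a b : V) : Prop :=
  0 < X.υ a b ∧ (X.deleteEdge a b).conn a b < X.υ a b

/-- `ab` is a β-strong edge. -/
def BetaStrong (X : FuzzyGraph V) (a b : V) : Prop :=
  0 < X.υ a b ∧ X.υ a b = (X.deleteEdge a b).conn a b

/-- `ab` is a δ-edge. -/
def DeltaEdge (X : FuzzyGraph V) (a b : V) : Prop :=
  0 < X.υ a b ∧ X.υ a b < (X.deleteEdge a b).conn a b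

/-- The minimum weight of a strong edge incident at `a`. -/
noncomputable def minInc (X : FuzzyGraph V) (a : V) : ℝ :=
  sInf {w | ∃ b, X.StrongEdge a b ∧ w = X.υ a b}

/-- The weight of a set of vertices. -/
noncomputable def weight (X : FuzzyGraph V) (S : Finset V) : ℝ :=
  ∑ a ∈ S, X.minInc a

/-- `D` is a strong dominating set. -/
def IsSDS (X : FuzzyGraph V) (D : Finset V) : Prop :=
  ∀ v, v ∉ D → ∃ a ∈ D, X.StrongEdge a v

/-- `D` is a minimal strong dominating set. -/
def IsMinimalSDS (X : FuzzyGraph V) (D : Finset V) : Prop :=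
  X.IsSDS D ∧ ∀ a ∈ D, ¬ X.IsSDS (D.erase a)

/-- `D` is a minimum (least weight) strong dominating set. -/
def IsMinimumSDS (X : FuzzyGraph V) (D : Finset V) : Prop :=
  X.IsSDS D ∧ ∀ D' : Finset V, X.IsSDS D' → X.weight D ≤ X.weight D'

/-- The strong domination degree of a vertex. -/
noncomputable def sd (X : FuzzyGraph V) (u : V) : ℝ :=
  sInf {w | ∃ D : Finset V, X.IsMinimalSDS D ∧ u ∈ D ∧ w = X.weight D}

/-- The strong domination number. -/
noncomputable def gammaS (X : FuzzyGraph V) : ℝ :=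
  sInf {w | ∃ D : Finset V, X.IsSDS D ∧ w = X.weight D}

/-- The upper strong domination number. -/
noncomputable def GammaS (X : FuzzyGraph V) : ℝ :=
  sSup {w | ∃ D : Finset V, X.IsMinimalSDS D ∧ w = X.weight D}

/-- The strong domination index. -/
noncomputable def SDI (X : FuzzyGraph V) : ℝ := ∑ u : V, X.sd u

/-- `X` is connected. -/
def Connected (X : FuzzyGraph V) : Prop := ∀ a b : V, a ≠ b → ∃ l, X.IsPath a b l

/-- `X` is a strong fuzzy graph: every edge is strong. -/
def IsStrongFG (X : FuzzyGraph V) : Prop := ∀ a b, 0 < X.υ a b → X.StrongEdge a b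

/-- Underlying (support) simple graph. -/
def support (X : FuzzyGraph V) : SimpleGraph V where
  Adj a b := 0 < X.υ a b
  symm := ⟨by intro a b h; (try dsimp only at h ⊢); rw [X.symm]; exact h⟩
  loopless := ⟨by intro a h; (try dsimp only at h); rw [X.loopless] at h; exact lt_irrefl 0 h⟩

/-- `X` is a fuzzy tree. -/
def IsFuzzyTree (X : FuzzyGraph V) : Prop :=
  ∃ F : FuzzyGraph V, F.ρ = X.ρ ∧ (∀ a b, F.υ a b = X.υ a b ∨ F.υ a b = 0) ∧
    F.support.IsTree ∧ ∀ a b, 0 < X.υ a b → F.υ a b = 0 → X.υ a b < F.conn a b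

/-- The size of a fuzzy graph: the sum of all edge weights. -/
noncomputable def size (X : FuzzyGraph V) : ℝ := (∑ a : V, ∑ b : V, X.υ a b) / 2

/-- The underlying graph of `X` is a cycle. -/
def IsCycleGraph (X : FuzzyGraph V) : Prop :=
  ∃ n : ℕ, 3 ≤ n ∧ ∃ f : ZMod n ≃ V,
    ∀ x y : V, 0 < X.υ x y ↔ ∃ i : ZMod n, (x = f i ∧ y = f (i + 1)) ∨ (x = f (i + 1) ∧ y = f i)

/-- `X` is a fuzzy cycle: a cycle with at least two edges of minimum weight. -/
def IsFuzzyCycle (X : FuzzyGraph V) : Prop :=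
  X.IsCycleGraph ∧ ∃ a b c d : V, 0 < X.υ a b ∧ 0 < X.υ c d ∧
    Sym2.mk (a, b) ≠ Sym2.mk (c, d) ∧ X.υ a b = X.υ c d ∧
    ∀ x y, 0 < X.υ x y → X.υ a b ≤ X.υ x y

/-- A set of pairwise fuzzy independent vertices. -/
def IsFuzzyIndep (X : FuzzyGraph V) (S : Finset V) : Prop :=
  ∀ a ∈ S, ∀ b ∈ S, a ≠ b → ¬ X.StrongEdge a b

/-- The strong independent domination number. -/
noncomputable def iS (X : FuzzyGraph V) : ℝ :=
  sInf {w | ∃ D : Finset V, X.IsSDS D ∧ X.IsFuzzyIndep D ∧ w = X.weight D}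

/-- The strong independence number. -/
noncomputable def betaS (X : FuzzyGraph V) : ℝ :=
  sSup {w | ∃ S : Finset V, X.IsFuzzyIndep S ∧ w = X.weight S}

/-- Closed strong neighborhood. -/
def closedNbhd (X : FuzzyGraph V) (a : V) : Set V := insert a {b | X.StrongEdge a b}

/-- Open strong neighborhood. -/
def openNbhd (X : FuzzyGraph V) (a : V) : Set V := {b | X.StrongEdge a b}

/-- Private neighborhood of `a` with respect to `S`. -/
def privNbhd (X : FuzzyGraph V) (a : V) (S : Finset V) : Set V :=
  X.closedNbhd a \ ⋃ b ∈ S.erase a, X.closedNbhd b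

/-- `S` is a fuzzy irredundant set. -/
def IsIrredundant (X : FuzzyGraph V) (S : Finset V) : Prop :=
  ∀ a ∈ S, (X.privNbhd a S).Nonempty

/-- `S` is a maximal fuzzy irredundant set. -/
def IsMaximalIrredundant (X : FuzzyGraph V) (S : Finset V) : Prop :=
  X.IsIrredundant S ∧ ∀ v ∉ S, ¬ X.IsIrredundant (insert v S)

/-- The strong irredundance number. -/
noncomputable def irS (X : FuzzyGraph V) : ℝ :=
  sInf {w | ∃ S : Finset V, X.IsMaximalIrredundant S ∧ w = X.weight S}

end FuzzyGraph
/-!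
Every edge of a star ends in a pendant vertex, so deleting it leaves no path between its
ends: all edges are strong. The centre alone is then a minimal strong dominating set, of
weight the least edge weight. A minimal strong dominating set containing a leaf cannot contain
the centre (which dominates everything by itself), so it must be the set of all leaves; each
leaf has a single incident edge, so this set weighs the size of the star.
-/

namespace FuzzyGraph

variable {V : Type*} {X : FuzzyGraph V}

lemma IsPath.exists_υ_head_pos {a b : V} {l : List V} (h : X.IsPath a b l) :
    ∃ x, 0 < X.υ a x := by
  obtain ⟨-, hhead, -, hlen, hchain⟩ := h
  rcases l with _ | ⟨a', _ | ⟨x, l⟩⟩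
  · simp at hlen
  · simp at hlen
  · obtain rfl : a' = a := by simpa using hhead
    exact ⟨x, hchain.rel⟩

lemma IsPath.reverse {a b : V} {l : List V} (h : X.IsPath a b l) :
    X.IsPath b a l.reverse := by
  obtain ⟨hnodup, hhead, hlast, hlen, hchain⟩ := h
  refine ⟨List.nodup_reverse.mpr hnodup, by rwa [List.head?_reverse],
    by rwa [List.getLast?_reverse], by rwa [List.length_reverse], ?_⟩
  exact List.isChain_reverse.mpr (hchain.imp fun x y hxy => by rwa [X.symm])

lemma conn_eq_zero_of_forall_υ_left_eq_zero {a : V} (ha : ∀ x, X.υ a x = 0) (b : V) :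
    X.conn a b = 0 := by
  have hnopath : {s | ∃ l, X.IsPath a b l ∧ s = X.pathStrength l} = ∅ := by
    refine Set.eq_empty_of_forall_notMem ?_
    rintro s ⟨l, hl, -⟩
    obtain ⟨x, hx⟩ := hl.exists_υ_head_pos
    exact hx.ne' (ha x)
  rw [conn, hnopath, Real.sSup_empty]

lemma conn_eq_zero_of_forall_υ_right_eq_zero {b : V} (hb : ∀ x, X.υ x b = 0) (a : V) :
    X.conn a b = 0 := by
  have hnopath : {s | ∃ l, X.IsPath a b l ∧ s = X.pathStrength l} = ∅ := by
    refine Set.eq_empty_of_forall_notMem ?_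
    rintro s ⟨l, hl, -⟩
    obtain ⟨x, hx⟩ := hl.reverse.exists_υ_head_pos
    exact hx.ne' (X.symm b x ▸ hb x)
  rw [conn, hnopath, Real.sSup_empty]

def IsStar (X : FuzzyGraph V) (c : V) : Prop :=
  ∀ a b : V, 0 < X.υ a b ↔ ((a = c ∧ b ≠ c) ∨ (b = c ∧ a ≠ c))

variable {c : V}

lemma IsStar.υ_eq_zero_of_ne (hX : X.IsStar c) {a b : V} (ha : a ≠ c) (hb : b ≠ c) :
    X.υ a b = 0 :=
  le_antisymm (not_lt.mp fun h => by rcases (hX a b).mp h with ⟨h, -⟩ | ⟨h, -⟩ <;> contradiction)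
    (X.υ_nonneg a b)

lemma IsStar.υ_center_pos (hX : X.IsStar c) {v : V} (hv : v ≠ c) : 0 < X.υ c v :=
  (hX c v).mpr (Or.inl ⟨rfl, hv⟩)

lemma IsStar.eq_center_of_υ_pos (hX : X.IsStar c) {x v : V} (hv : v ≠ c) (hxv : 0 < X.υ x v) :
    x = c := by
  rcases (hX x v).mp hxv with ⟨h, -⟩ | ⟨h, -⟩
  exacts [h, absurd h hv]

variable [DecidableEq V]

lemma deleteEdge_comm (a b : V) : X.deleteEdge a b = X.deleteEdge b a := by
  unfold deleteEdge
  congr 1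
  funext x y
  simp only [or_comm]

lemma deleteEdge_υ_eq_zero_of_pendant {a b : V} (hb : ∀ x, 0 < X.υ x b → x = a) (x : V) :
    (X.deleteEdge a b).υ x b = 0 := by
  by_cases hx : x = a
  · simp [deleteEdge, hx]
  · simp only [deleteEdge, hx, false_and, false_or]
    split_ifs
    · rfl
    · exact le_antisymm (not_lt.mp (mt (hb x) hx)) (X.υ_nonneg x b)

lemma strongEdge_of_pendant {a b : V} (hab : 0 < X.υ a b) (hb : ∀ x, 0 < X.υ x b → x = a) :
    X.StrongEdge a b ∧ X.StrongEdge b a := by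
  have hisolated := deleteEdge_υ_eq_zero_of_pendant hb
  refine ⟨⟨hab, ?_⟩, ⟨X.symm a b ▸ hab, ?_⟩⟩
  · rw [conn_eq_zero_of_forall_υ_right_eq_zero hisolated]
    exact hab.le
  · rw [← deleteEdge_comm, conn_eq_zero_of_forall_υ_left_eq_zero
      (fun x => (X.deleteEdge a b).symm b x ▸ hisolated x)]
    exact (X.symm a b ▸ hab).le

lemma minInc_nonneg (a : V) : 0 ≤ X.minInc a :=
  Real.sInf_nonneg fun _ ⟨b, _, hw⟩ => hw ▸ X.υ_nonneg a b

lemma sd_eq_minInc_of_isMinimalSDS_singleton {a : V} (h : X.IsMinimalSDS {a}) :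
    X.sd a = X.minInc a := by
  refine IsLeast.csInf_eq ⟨⟨{a}, h, mem_singleton_self a, by simp [weight]⟩, ?_⟩
  rintro _ ⟨D, -, haD, rfl⟩
  exact single_le_sum (fun b _ => minInc_nonneg b) haD

lemma sd_eq_weight_of_unique {u : V} {D : Finset V} (hD : X.IsMinimalSDS D) (huD : u ∈ D)
    (huniq : ∀ D', X.IsMinimalSDS D' → u ∈ D' → D' = D) : X.sd u = X.weight D := by
  refine IsLeast.csInf_eq ⟨⟨D, hD, huD, rfl⟩, ?_⟩
  rintro _ ⟨D', hD', huD', rfl⟩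
  rw [huniq D' hD' huD']

lemma IsStar.strongEdge_center (hX : X.IsStar c) {v : V} (hv : v ≠ c) :
    X.StrongEdge c v ∧ X.StrongEdge v c :=
  strongEdge_of_pendant (hX.υ_center_pos hv) fun _ => hX.eq_center_of_υ_pos hv

lemma IsStar.minInc_of_ne (hX : X.IsStar c) {u : V} (hu : u ≠ c) : X.minInc u = X.υ u c := by
  have hincident : {w | ∃ b, X.StrongEdge u b ∧ w = X.υ u b} = {X.υ u c} := by
    ext w
    constructor
    · rintro ⟨b, hub, rfl⟩
      obtain rfl := hX.eq_center_of_υ_pos hu (by rw [X.symm]; exact hub.1)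
      rfl
    · rintro rfl
      exact ⟨c, (hX.strongEdge_center hu).2, rfl⟩
  rw [minInc, hincident, csInf_singleton]

lemma IsStar.minInc_center (hX : X.IsStar c) :
    X.minInc c = sInf {w | ∃ u v : V, 0 < X.υ u v ∧ w = X.υ u v} := by
  rw [minInc]
  congr 1
  ext w
  constructor
  · rintro ⟨b, hcb, rfl⟩
    exact ⟨c, b, hcb.1, rfl⟩
  · rintro ⟨u, v, huv, rfl⟩
    rcases (hX u v).mp huv with ⟨rfl, hv⟩ | ⟨rfl, hu⟩
    · exact ⟨v, (hX.strongEdge_center hv).1, rfl⟩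
    · exact ⟨u, (hX.strongEdge_center hu).1, X.symm u v⟩

lemma IsStar.isMinimalSDS_singleton_center (hX : X.IsStar c) : X.IsMinimalSDS {c} := by
  refine ⟨fun v hv => ⟨c, mem_singleton_self c, (hX.strongEdge_center ?_).1⟩, ?_⟩
  · simpa using hv
  · intro a ha hdom
    obtain rfl := mem_singleton.mp ha
    obtain ⟨b, hb, -⟩ := hdom a (by simp)
    simp at hb

lemma IsStar.sd_center (hX : X.IsStar c) : X.sd c = X.minInc c :=
  sd_eq_minInc_of_isMinimalSDS_singleton hX.isMinimalSDS_singleton_center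

variable [Fintype V]

lemma IsStar.isMinimalSDS_leaves (hX : X.IsStar c) {u : V} (hu : u ≠ c) :
    X.IsMinimalSDS (univ.erase c) := by
  constructor
  · intro v hv
    obtain rfl : v = c := by simpa using hv
    exact ⟨u, mem_erase.mpr ⟨hu, mem_univ u⟩, (hX.strongEdge_center hu).2⟩
  · intro a ha hdom
    obtain ⟨b, hb, hba⟩ := hdom a (notMem_erase a _)
    exact ne_of_mem_erase (mem_of_mem_erase hb) (hX.eq_center_of_υ_pos (ne_of_mem_erase ha) hba.1)

lemma IsStar.eq_leaves_of_isMinimalSDS (hX : X.IsStar c) {u : V} (hu : u ≠ c) {D : Finset V}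
    (hD : X.IsMinimalSDS D) (huD : u ∈ D) : D = univ.erase c := by
  have hcD : c ∉ D := by
    intro hcD
    refine hD.2 u huD fun v hv => ⟨c, mem_erase.mpr ⟨hu.symm, hcD⟩, (hX.strongEdge_center ?_).1⟩
    rintro rfl
    exact hv (mem_erase.mpr ⟨hu.symm, hcD⟩)
  ext v
  simp only [mem_erase, mem_univ, and_true]
  refine ⟨fun hvD hvc => hcD (hvc ▸ hvD), fun hvc => by_contra fun hvD => ?_⟩
  obtain ⟨a, haD, hav⟩ := hD.1 v hvD
  exact hcD (hX.eq_center_of_υ_pos hvc hav.1 ▸ haD)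

lemma IsStar.sd_of_ne (hX : X.IsStar c) {u : V} (hu : u ≠ c) :
    X.sd u = X.weight (univ.erase c) :=
  sd_eq_weight_of_unique (hX.isMinimalSDS_leaves hu) (mem_erase.mpr ⟨hu, mem_univ u⟩)
    fun _ hD huD => hX.eq_leaves_of_isMinimalSDS hu hD huD

lemma IsStar.weight_leaves (hX : X.IsStar c) : X.weight (univ.erase c) = X.size := by
  have hrow : ∀ a ∈ univ.erase c, ∑ b, X.υ a b = X.υ a c := fun a ha =>
    sum_eq_single c (fun b _ hb => hX.υ_eq_zero_of_ne (ne_of_mem_erase ha) hb) (by simp)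
  have hcenter : ∑ b, X.υ c b = ∑ b ∈ univ.erase c, X.υ b c := by
    rw [← sum_erase univ (X.loopless c)]
    exact sum_congr rfl fun b _ => X.symm c b
  rw [size, ← add_sum_erase _ _ (mem_univ c), sum_congr rfl hrow, hcenter, weight,
    sum_congr rfl fun u hu => hX.minInc_of_ne (ne_of_mem_erase hu)]
  ring

end FuzzyGraph

theorem FuzzyGraph.SDI_fuzzyStar_general {V : Type*} [Fintype V] [DecidableEq V]
    (X : FuzzyGraph V) (c : V)
    (hstar : ∀ a b : V, 0 < X.υ a b ↔ ((a = c ∧ b ≠ c) ∨ (b = c ∧ a ≠ c))) :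
    X.SDI = sInf {w | ∃ u v : V, 0 < X.υ u v ∧ w = X.υ u v} +
      ((Fintype.card V - 1 : ℕ) : ℝ) * X.size := by
  have hX : X.IsStar c := hstar
  have hleaves : ∑ u ∈ univ.erase c, X.sd u = ∑ _u ∈ univ.erase c, X.size :=
    sum_congr rfl fun u hu => (hX.sd_of_ne (ne_of_mem_erase hu)).trans hX.weight_leaves
  rw [SDI, ← add_sum_erase _ _ (mem_univ c), hX.sd_center, hX.minInc_center, hleaves, sum_const,
    card_erase_of_mem (mem_univ c), card_univ, nsmul_eq_mul]

/-- For a fuzzy star FS_n with center c,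
SDI(FS_n) = min edge weight + n·q. -/
theorem FuzzyGraph.SDI_fuzzyStar {V : Type*} [Fintype V] [DecidableEq V]
    (X : FuzzyGraph V) (c : V)
    (hstar : ∀ a b : V, 0 < X.υ a b ↔ ((a = c ∧ b ≠ c) ∨ (b = c ∧ a ≠ c)))
    (hstrong : X.IsStrongFG) :
    X.SDI = sInf {w | ∃ u v : V, 0 < X.υ u v ∧ w = X.υ u v} +
      ((Fintype.card V - 1 : ℕ) : ℝ) * X.size :=
  FuzzyGraph.SDI_fuzzyStar_general X c hstar
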